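/- arXiv:2603.12137 — 2 statements merged into one kernel-verified Lean document; each statement's English description precedes it below -/
import Mathlib

section
/- (Closed form of the stable point.) Suppose α_i ∈ (0,1) for all i, and β_i ∈ [0,1] for all i with β_j < 1 for at least one j. Then ρ(Ψ_K Λ_β) < 1, the matrix I − Ψ_K Λ_β is invertible, and the map x ↦ Ψ_K((I − Λ_β)x* + Λ_β x) has the unique fixed point x_PS = (I − Ψ_K Λ_β)^{−1} Ψ_K (I − Λ_β) x*. -/
/-! `Ψ_K` obeys `Ψ_{K+1} = (I − Λ_α) + Λ_α W Ψ_K`, so it is nonnegative with row sums at most one,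
has a positive diagonal and, for `K ≥ 1`, positive entries on the edges of `G`. For an eigenvector
`u` of `Ψ_K Λ_β` with eigenvalue of modulus `≥ 1`, every vertex `Ψ_K`-linked to a maximum-modulus
entry of `u` is again one and has `β = 1`; by connectivity this reaches the vertex with `β_j < 1`,
which is absurd. Hence `ρ(Ψ_K Λ_β) < 1`, `1` is not an eigenvalue, and the fixed-point equation
`x = Ψ_K Λ_β x + Ψ_K (I − Λ_β) x*` is solved by inverting `I − Ψ_K Λ_β`. -/

open Matrix Filter Topology

/-- Row-normalized adjacency matrix `W = deg⁻¹ A` of a simple graph. -/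
noncomputable def rowNormAdj {n : ℕ} (G : SimpleGraph (Fin n)) [DecidableRel G.Adj] :
    Matrix (Fin n) (Fin n) ℝ :=
  Matrix.of fun i j => (G.adjMatrix ℝ) i j / (G.degree i : ℝ)

/-- The multi-step influence matrix
`Ψ_K = Σ_{k=0}^{K−1} (Λ_α W)^k (I − Λ_α) + (Λ_α W)^K`. -/
noncomputable def Psi {n : ℕ} (K : ℕ) (α : Fin n → ℝ) (W : Matrix (Fin n) (Fin n) ℝ) :
    Matrix (Fin n) (Fin n) ℝ :=
  (∑ k ∈ Finset.range K, (Matrix.diagonal α * W) ^ k * (1 - Matrix.diagonal α))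
    + (Matrix.diagonal α * W) ^ K
/-- The spectral radius of a real square matrix: the maximum modulus of its
complex eigenvalues. -/
noncomputable def specRad {n : ℕ} (M : Matrix (Fin n) (Fin n) ℝ) : ℝ :=
  sSup ((fun z : ℂ => ‖z‖) '' spectrum ℂ (M.map Complex.ofReal))

theorem SimpleGraph.Reachable.of_forall_adj {V : Type*} {G : SimpleGraph V} {p : V → Prop}
    (hp : ∀ i j, G.Adj i j → p i → p j) {u v : V} (h : G.Reachable u v) (hu : p u) : p v := by
  obtain ⟨w⟩ := h
  induction w with
  | nil => exact hu
  | cons ha _ ih => exact ih (hp _ _ ha hu)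

theorem Matrix.exists_mulVec_eq_smul_of_mem_spectrum {K V : Type*} [Field K] [Fintype V]
    [DecidableEq V] {A : Matrix V V K} {z : K} (hz : z ∈ spectrum K A) :
    ∃ u ≠ 0, A *ᵥ u = z • u := by
  rw [← Matrix.spectrum_toLin', ← Module.End.hasEigenvalue_iff_mem_spectrum] at hz
  obtain ⟨u, hu⟩ := hz.exists_hasEigenvector
  exact ⟨u, hu.2, by simpa using hu.apply_eq_smul⟩

theorem Matrix.eq_mulVec_add_iff {R V : Type*} [CommRing R] [Fintype V] [DecidableEq V]
    {A : Matrix V V R} (hA : IsUnit (1 - A)) (x b : V → R) :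
    x = A *ᵥ x + b ↔ x = (1 - A)⁻¹ *ᵥ b := by
  have hdet := (Matrix.isUnit_iff_isUnit_det _).mp hA
  rw [← sub_eq_iff_eq_add', show x - A *ᵥ x = (1 - A) *ᵥ x by rw [sub_mulVec, one_mulVec]]
  constructor
  · rintro rfl
    rw [mulVec_mulVec, nonsing_inv_mul _ hdet, one_mulVec]
  · rintro rfl
    rw [mulVec_mulVec, mul_nonsing_inv _ hdet, one_mulVec]

theorem specRad_lt_of_forall_norm_lt {n : ℕ} {M : Matrix (Fin n) (Fin n) ℝ} {r : ℝ} (hr : 0 < r)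
    (h : ∀ z ∈ spectrum ℂ (M.map Complex.ofReal), ‖z‖ < r) : specRad M < r := by
  have hfin := (Matrix.finite_spectrum (M.map Complex.ofReal)).image (fun z : ℂ => ‖z‖)
  rcases ((fun z : ℂ => ‖z‖) '' spectrum ℂ (M.map Complex.ofReal)).eq_empty_or_nonempty
    with hempty | hne
  · rwa [specRad, hempty, Real.sSup_empty]
  · rw [specRad, hfin.csSup_lt_iff hne]
    rintro _ ⟨z, hz, rfl⟩
    exact h z hz

section Psi

variable {n : ℕ} {α : Fin n → ℝ} {W : Matrix (Fin n) (Fin n) ℝ}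

theorem Psi_zero : Psi 0 α W = 1 := by
  simp [Psi]

theorem Psi_succ (K : ℕ) :
    Psi (K + 1) α W = (1 - diagonal α) + diagonal α * W * Psi K α W := by
  simp only [Psi, Finset.sum_range_succ', pow_succ', pow_zero, one_mul, Matrix.mul_add,
    Finset.mul_sum, Matrix.mul_assoc]
  abel

theorem Psi_succ_apply (K : ℕ) (i j : Fin n) :
    Psi (K + 1) α W i j = (if i = j then 1 - α i else 0) + α i * ∑ l, W i l * Psi K α W l j := by
  rw [Psi_succ, Matrix.add_apply, Matrix.sub_apply, one_apply, diagonal_apply, Matrix.mul_assoc,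
    diagonal_mul, mul_apply]
  split_ifs <;> ring

variable (hα : ∀ i, α i ∈ Set.Icc 0 1) (hW : ∀ i j, 0 ≤ W i j)
include hα hW

theorem Psi_nonneg (K : ℕ) (i j : Fin n) : 0 ≤ Psi K α W i j := by
  induction K generalizing i j with
  | zero => rw [Psi_zero, one_apply]; split_ifs <;> norm_num
  | succ K ih =>
    rw [Psi_succ_apply]
    have := sub_nonneg.2 (hα i).2
    have := Finset.sum_nonneg fun l (_ : l ∈ Finset.univ) => mul_nonneg (hW i l) (ih l j)
    split_ifs <;> nlinarith [(hα i).1]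

theorem Psi_sum_le_one (hWsum : ∀ i, ∑ j, W i j ≤ 1) (K : ℕ) (i : Fin n) :
    ∑ j, Psi K α W i j ≤ 1 := by
  induction K generalizing i with
  | zero => simp [Psi_zero, one_apply]
  | succ K ih =>
    have hrow : ∑ l, W i l * ∑ j, Psi K α W l j ≤ 1 := calc
      _ ≤ ∑ l, W i l := Finset.sum_le_sum fun l _ =>
            mul_le_of_le_one_right (hW i l) (ih l)
      _ ≤ 1 := hWsum i
    simp only [Psi_succ_apply, Finset.sum_add_distrib, Finset.sum_ite_eq, Finset.mem_univ,
      if_true, ← Finset.mul_sum]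
    rw [Finset.sum_comm]
    simp only [← Finset.mul_sum]
    nlinarith [(hα i).1]

theorem Psi_diag_pos {j : Fin n} (hj : α j < 1) (K : ℕ) : 0 < Psi K α W j j := by
  cases K with
  | zero => simp [Psi_zero]
  | succ K =>
    rw [Psi_succ_apply, if_pos rfl]
    have := Finset.sum_nonneg fun l (_ : l ∈ Finset.univ) =>
      mul_nonneg (hW j l) (Psi_nonneg hα hW K l j)
    nlinarith [(hα j).1]

theorem Psi_succ_pos {i j : Fin n} (hi : 0 < α i) (hij : 0 < W i j) (hj : α j < 1) (K : ℕ) :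
    0 < Psi (K + 1) α W i j := by
  have hterm : 0 < W i j * Psi K α W j j := mul_pos hij (Psi_diag_pos hα hW hj K)
  have hsum : W i j * Psi K α W j j ≤ ∑ l, W i l * Psi K α W l j :=
    Finset.single_le_sum (fun l _ => mul_nonneg (hW i l) (Psi_nonneg hα hW K l j))
      (Finset.mem_univ j)
  rw [Psi_succ_apply]
  have := sub_nonneg.2 (hα i).2
  split_ifs <;> nlinarith

end Psi

section rowNormAdj

variable {n : ℕ} (G : SimpleGraph (Fin n)) [DecidableRel G.Adj]

theorem rowNormAdj_nonneg (i j : Fin n) : 0 ≤ rowNormAdj G i j := by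
  rw [rowNormAdj, of_apply, SimpleGraph.adjMatrix_apply]
  split_ifs <;> positivity

theorem rowNormAdj_sum_le_one (i : Fin n) : ∑ j, rowNormAdj G i j ≤ 1 := by
  have hdeg : ∑ j, G.adjMatrix ℝ i j = G.degree i := by
    simpa [mulVec, dotProduct] using
      SimpleGraph.adjMatrix_mulVec_const_apply (G := G) (α := ℝ) (a := 1) (v := i)
  simp only [rowNormAdj, of_apply, ← Finset.sum_div, hdeg]
  exact div_self_le_one _

theorem rowNormAdj_pos_of_adj {i j : Fin n} (h : G.Adj i j) : 0 < rowNormAdj G i j := by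
  have : 0 < G.degree i := G.degree_pos_iff_exists_adj i |>.2 ⟨j, h⟩
  rw [rowNormAdj, of_apply, SimpleGraph.adjMatrix_apply, if_pos h]
  positivity

end rowNormAdj

section MaximumModulus

variable {𝕜 V : Type*} [RCLike 𝕜] [Fintype V] [DecidableEq V] {P : Matrix V V ℝ} {β : V → ℝ}
  (hP : ∀ i j, 0 ≤ P i j) (hPsum : ∀ i, ∑ j, P i j ≤ 1) (hβ : ∀ j, β j ∈ Set.Icc 0 1)
include hP hPsum hβ

theorem mul_norm_apply_eq_norm_of_mulVec_eq_smul {z : 𝕜} {u : V → 𝕜}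
    (hu : (P * diagonal β).map (algebraMap ℝ 𝕜) *ᵥ u = z • u) (hz : 1 ≤ ‖z‖)
    {i j : V} (hi : ‖u i‖ = ‖u‖) (hij : 0 < P i j) : β j * ‖u j‖ = ‖u‖ := by
  have hgap : ∀ l, 0 ≤ ‖u‖ - β l * ‖u l‖ := fun l => by
    have := norm_le_pi_norm u l
    nlinarith [(hβ l).1, (hβ l).2, norm_nonneg (u l)]
  have hmass : ‖u‖ ≤ ∑ l, P i l * (β l * ‖u l‖) := calc
    ‖u‖ = ‖u i‖ := hi.symm
    _ ≤ ‖z‖ * ‖u i‖ := le_mul_of_one_le_left (norm_nonneg _) hz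
    _ = ‖∑ l, algebraMap ℝ 𝕜 (P i l * β l) * u l‖ := by
      rw [← norm_mul, ← smul_eq_mul, ← Pi.smul_apply, ← hu]
      simp [mulVec, dotProduct, mul_diagonal]
    _ ≤ ∑ l, ‖algebraMap ℝ 𝕜 (P i l * β l) * u l‖ := norm_sum_le _ _
    _ = ∑ l, P i l * (β l * ‖u l‖) := Finset.sum_congr rfl fun l _ => by
      rw [norm_mul, norm_algebraMap', Real.norm_of_nonneg (mul_nonneg (hP i l) (hβ l).1),
        mul_assoc]
  have hzero : ∑ l, P i l * (‖u‖ - β l * ‖u l‖) = 0 := by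
    refine le_antisymm ?_ (Finset.sum_nonneg fun l _ => mul_nonneg (hP i l) (hgap l))
    have := mul_le_of_le_one_left (norm_nonneg u) (hPsum i)
    simp only [mul_sub, Finset.sum_sub_distrib, ← Finset.sum_mul]
    linarith
  have hj := (Finset.sum_eq_zero_iff_of_nonneg fun l _ => mul_nonneg (hP i l) (hgap l)).1
    hzero j (Finset.mem_univ j)
  linarith [(mul_eq_zero.1 hj).resolve_left hij.ne']

theorem norm_lt_one_of_mem_spectrum {G : SimpleGraph V} (hG : G.Connected)
    (hPadj : ∀ i j, G.Adj i j → 0 < P i j) {j₀ : V} (hPdiag : 0 < P j₀ j₀) (hj₀ : β j₀ < 1)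
    {z : 𝕜} (hz : z ∈ spectrum 𝕜 ((P * diagonal β).map (algebraMap ℝ 𝕜))) : ‖z‖ < 1 := by
  obtain ⟨u, hu0, hu⟩ := exists_mulVec_eq_smul_of_mem_spectrum hz
  by_contra! hz1
  have hpos : 0 < ‖u‖ := norm_pos_iff.2 hu0
  have hmax : ∀ {i j}, ‖u i‖ = ‖u‖ → 0 < P i j → β j = 1 ∧ ‖u j‖ = ‖u‖ := fun {i j} hi hij => by
    have h := mul_norm_apply_eq_norm_of_mulVec_eq_smul hP hPsum hβ hu hz1 hi hij
    have hle := norm_le_pi_norm u j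
    have hβj : β j = 1 := by nlinarith [(hβ j).1, (hβ j).2, norm_nonneg (u j)]
    exact ⟨hβj, by simpa [hβj] using h⟩
  have : Nonempty V := hG.nonempty
  obtain ⟨i₀, hi₀⟩ := (IsGreatest.pi_norm u).1
  have hall : ∀ j, ‖u j‖ = ‖u‖ := fun j =>
    (hG.preconnected i₀ j).of_forall_adj (fun _ _ hij hi => (hmax hi (hPadj _ _ hij)).2) hi₀
  exact hj₀.ne (hmax (hall j₀) hPdiag).1

end MaximumModulus

theorem closed_form_stable_point_general {n : ℕ} (G : SimpleGraph (Fin n))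
    [DecidableRel G.Adj] (hG : G.Connected) (K : ℕ) (hK : 1 ≤ K)
    (α β : Fin n → ℝ) (hα : ∀ i, α i ∈ Set.Ioo (0 : ℝ) 1)
    (hβ : ∀ i, β i ∈ Set.Icc (0 : ℝ) 1) (hβlt : ∃ j, β j < 1)
    (xstar : Fin n → ℝ) :
    specRad (Psi K α (rowNormAdj G) * Matrix.diagonal β) < 1 ∧
    IsUnit (1 - Psi K α (rowNormAdj G) * Matrix.diagonal β) ∧
    ∀ x : Fin n → ℝ,
      (x = Psi K α (rowNormAdj G) *ᵥ
          ((1 - Matrix.diagonal β) *ᵥ xstar + Matrix.diagonal β *ᵥ x)) ↔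
      x = ((1 - Psi K α (rowNormAdj G) * Matrix.diagonal β)⁻¹ *
            (Psi K α (rowNormAdj G) * (1 - Matrix.diagonal β))) *ᵥ xstar := by
  obtain ⟨k, rfl⟩ := Nat.exists_eq_add_of_le' hK
  obtain ⟨j₀, hj₀⟩ := hβlt
  have hα' : ∀ i, α i ∈ Set.Icc 0 1 := fun i => Set.Ioo_subset_Icc_self (hα i)
  have hW := rowNormAdj_nonneg G
  have hspec : ∀ {𝕜 : Type} [RCLike 𝕜] {z : 𝕜}, z ∈ spectrum 𝕜
      ((Psi (k + 1) α (rowNormAdj G) * diagonal β).map (algebraMap ℝ 𝕜)) → ‖z‖ < 1 :=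
    norm_lt_one_of_mem_spectrum (Psi_nonneg hα' hW _)
      (Psi_sum_le_one hα' hW (rowNormAdj_sum_le_one G) _) hβ hG
      (fun i j hij => Psi_succ_pos hα' hW (hα i).1 (rowNormAdj_pos_of_adj G hij) (hα j).2 k)
      (Psi_diag_pos hα' hW (hα j₀).2 _) hj₀
  have hunit : IsUnit (1 - Psi (k + 1) α (rowNormAdj G) * diagonal β) := by
    have h1 : (1 : ℝ) ∉ spectrum ℝ (Psi (k + 1) α (rowNormAdj G) * diagonal β) := fun h => by
      simpa using hspec (𝕜 := ℝ) (z := 1) (by simpa using h)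
    simpa only [map_one] using spectrum.notMem_iff.1 h1
  refine ⟨specRad_lt_of_forall_norm_lt one_pos fun z hz => hspec hz, hunit, fun x => ?_⟩
  rw [mulVec_add, mulVec_mulVec, mulVec_mulVec, add_comm, eq_mulVec_add_iff hunit,
    mulVec_mulVec]

/-- closed form of the stable point.  If `α_i ∈ (0,1)` for all
`i` and `β_j < 1` for some `j`, then `ρ(Ψ_K Λ_β) < 1`, `I − Ψ_K Λ_β` is
invertible and the unique fixed point of `x ↦ Ψ_K((I − Λ_β)x* + Λ_β x)` is
`x_PS = (I − Ψ_K Λ_β)⁻¹ Ψ_K (I − Λ_β) x*`. -/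
theorem closed_form_stable_point {n : ℕ} (hn : 2 ≤ n) (G : SimpleGraph (Fin n))
    [DecidableRel G.Adj] (hG : G.Connected) (K : ℕ) (hK : 1 ≤ K)
    (α β : Fin n → ℝ) (hα : ∀ i, α i ∈ Set.Ioo (0 : ℝ) 1)
    (hβ : ∀ i, β i ∈ Set.Icc (0 : ℝ) 1) (hβlt : ∃ j, β j < 1)
    (xstar : Fin n → ℝ) (hx : ∀ i, xstar i ∈ Set.Icc (0 : ℝ) 1) :
    specRad (Psi K α (rowNormAdj G) * Matrix.diagonal β) < 1 ∧
    IsUnit (1 - Psi K α (rowNormAdj G) * Matrix.diagonal β) ∧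
    ∀ x : Fin n → ℝ,
      (x = Psi K α (rowNormAdj G) *ᵥ
          ((1 - Matrix.diagonal β) *ᵥ xstar + Matrix.diagonal β *ᵥ x)) ↔
      x = ((1 - Psi K α (rowNormAdj G) * Matrix.diagonal β)⁻¹ *
            (Psi K α (rowNormAdj G) * (1 - Matrix.diagonal β))) *ᵥ xstar :=
  closed_form_stable_point_general G hG K hK α β hα hβ hβlt xstar
end

section
/- (Variance decreases in peer susceptibility.) Suppose G is d-regular (so W = A/d is symmetric), fix β ∈ (0,1), and suppose x* is not a constant vector (Var(x*) > 0). For α ∈ (0,1) set α_i ≡ α, let Ψ_∞(α) = Σ_{k=0}^{∞} (αW)^k (1 − α) = (1 − α)(I − αW)^{−1}, and let x_PS(α) = (1 − β)(I − βΨ_∞(α))^{−1} Ψ_∞(α) x*. Then the function α ↦ Var(x_PS(α)) is differentiable on (0,1) and its derivative is strictly negative at every α ∈ (0,1). -/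
/-!
Write `W = I − L` with `L = d⁻¹ · (graph Laplacian)`, which is positive semidefinite, kills the
constants, and (as `G` is connected) kills nothing else. With `t(α) = α / ((1 − β)(1 − α))`, which
increases with `α`, one finds `x_PS(α) = (I + t(α) L)⁻¹ x*`. This resolvent fixes the constant
vector and preserves the sum of the entries, so `Var(x_PS(α)) = ‖(I + t L)⁻¹ z‖²` for the centred
vector `z = x* − Mean(x*) 1`. Its `t`-derivative is `−2 (uᵀ L u + t ‖L u‖²)` with
`u = (I + t L)⁻² z`, and this is negative because `L u ≠ 0` when `x*` is not constant.
-/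

open Matrix Filter Topology

/-- `Mean(x) = (1/n) Σ_i x_i`. -/
noncomputable def meanV {n : ℕ} (x : Fin n → ℝ) : ℝ := (∑ i, x i) / n

/-- `Var(x) = Σ_i (x_i − Mean(x))²`. -/
noncomputable def varV {n : ℕ} (x : Fin n → ℝ) : ℝ := ∑ i, (x i - meanV x) ^ 2

variable {ι : Type*} [Fintype ι]

theorem HasDerivAt.dotProduct {u v : ℝ → ι → ℝ} {u' v' : ι → ℝ} {t : ℝ}
    (hu : HasDerivAt u u' t) (hv : HasDerivAt v v' t) :
    HasDerivAt (fun s => u s ⬝ᵥ v s) (u' ⬝ᵥ v t + u t ⬝ᵥ v') t :=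
  (HasDerivAt.fun_sum (u := Finset.univ) fun i _ =>
    (hasDerivAt_pi.1 hu i).fun_mul (hasDerivAt_pi.1 hv i)).congr_deriv
    (by rw [Finset.sum_add_distrib]; rfl)

variable [DecidableEq ι]

section

-- Any norm will do: the statements only involve the product topology on matrices.
attribute [local instance] Matrix.frobeniusNormedRing Matrix.frobeniusNormedAlgebra

theorem Matrix.hasDerivAt_inv {M : ℝ → Matrix ι ι ℝ} {M' : Matrix ι ι ℝ} {t : ℝ}
    (hM : HasDerivAt M M' t) (ht : IsUnit (M t)) :
    HasDerivAt (fun s => (M s)⁻¹) (-((M t)⁻¹ * M' * (M t)⁻¹)) t := by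
  obtain ⟨u, hu⟩ := ht
  have hinv := hasFDerivAt_ringInverse (𝕜 := ℝ) u
  rw [hu] at hinv
  have h := hinv.comp_hasDerivAt t hM
  have hfun : Ring.inverse ∘ M = fun s => (M s)⁻¹ :=
    funext fun s => (nonsing_inv_eq_ringInverse (M s)).symm
  have hval : (↑u⁻¹ : Matrix ι ι ℝ) = (M t)⁻¹ := by rw [coe_units_inv, hu]
  simp only [hfun, hval] at h
  exact h

theorem Matrix.hasDerivAt_inv_one_add_smul_mulVec {L : Matrix ι ι ℝ} {t : ℝ}
    (ht : IsUnit (1 + t • L)) (z : ι → ℝ) :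
    HasDerivAt (fun s => (1 + s • L)⁻¹ *ᵥ z)
      (-((1 + t • L)⁻¹ * L * (1 + t • L)⁻¹) *ᵥ z) t := by
  have hM : HasDerivAt (fun s : ℝ => 1 + s • L) L t := by
    have h := ((hasDerivAt_id t).smul_const L).const_add (1 : Matrix ι ι ℝ)
    simp only [id, one_smul] at h
    exact h
  exact ((mulVecBilin ℝ ℝ).flip z).toContinuousLinearMap.hasFDerivAt.comp_hasDerivAt t
    (hasDerivAt_inv hM ht)

end

theorem Matrix.inv_one_sub_smul_inv_mul_inv {R : Type*} [CommRing R] {Q M : Matrix ι ι R}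
    (hQ : IsUnit Q.det) {s c : R} (h : Q = s • M + c • 1) :
    (1 - c • Q⁻¹)⁻¹ * Q⁻¹ = (s • M)⁻¹ := by
  have hfactor : 1 - c • Q⁻¹ = Q⁻¹ * (s • M) := by
    rw [eq_sub_of_add_eq h.symm, Matrix.mul_sub, nonsing_inv_mul _ hQ, mul_smul_comm, mul_one]
  rw [hfactor, mul_inv_rev, nonsing_inv_nonsing_inv _ hQ, Matrix.mul_assoc,
    mul_nonsing_inv _ hQ, mul_one]

namespace Matrix.PosSemidef

variable {L : Matrix ι ι ℝ}

omit [Fintype ι] in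
theorem posDef_smul_one_add_smul (hL : L.PosSemidef) {a b : ℝ} (ha : 0 < a) (hb : 0 ≤ b) :
    (a • 1 + b • L).PosDef :=
  (PosDef.one.smul ha).add_posSemidef (hL.smul hb)

theorem isUnit_one_add_smul (hL : L.PosSemidef) {t : ℝ} (ht : 0 ≤ t) : IsUnit (1 + t • L) := by
  simpa using (hL.posDef_smul_one_add_smul one_pos ht).isUnit

theorem isUnit_det_one_add_smul (hL : L.PosSemidef) {t : ℝ} (ht : 0 ≤ t) :
    IsUnit (1 + t • L).det :=
  (isUnit_iff_isUnit_det _).1 (hL.isUnit_one_add_smul ht)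

theorem inv_one_add_smul_mulVec_one (hL : L.PosSemidef) (hL1 : L *ᵥ 1 = 0) {t : ℝ}
    (ht : 0 ≤ t) : (1 + t • L)⁻¹ *ᵥ 1 = 1 := by
  have hM1 : (1 + t • L) *ᵥ 1 = 1 := by
    rw [add_mulVec, one_mulVec, smul_mulVec, hL1, smul_zero, add_zero]
  conv_lhs => rw [← hM1]
  rw [mulVec_mulVec, nonsing_inv_mul _ (hL.isUnit_det_one_add_smul ht), one_mulVec]

theorem one_vecMul_inv_one_add_smul (hL : L.PosSemidef) (hL1 : L *ᵥ 1 = 0) {t : ℝ}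
    (ht : 0 ≤ t) : 1 ᵥ* (1 + t • L)⁻¹ = 1 := by
  have hsymm : (1 + t • L)⁻¹ᵀ = (1 + t • L)⁻¹ := by
    simpa [conjTranspose_eq_transpose_of_trivial] using
      (hL.posDef_smul_one_add_smul one_pos ht).inv.isHermitian.eq
  rw [← mulVec_transpose, hsymm, hL.inv_one_add_smul_mulVec_one hL1 ht]

theorem hasDerivAt_inv_one_add_smul_mulVec_dotProduct_self (hL : L.PosSemidef) {t : ℝ}
    (ht : 0 ≤ t) (z : ι → ℝ) :
    HasDerivAt (fun s => ((1 + s • L)⁻¹ *ᵥ z) ⬝ᵥ ((1 + s • L)⁻¹ *ᵥ z))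
      (-2 * (((1 + t • L)⁻¹ *ᵥ z) ⬝ᵥ (((1 + t • L)⁻¹ * L * (1 + t • L)⁻¹) *ᵥ z))) t := by
  have h := hasDerivAt_inv_one_add_smul_mulVec (hL.isUnit_one_add_smul ht) z
  refine (h.dotProduct h).congr_deriv ?_
  rw [neg_mulVec, neg_dotProduct, dotProduct_neg, dotProduct_comm]
  ring

theorem inv_one_add_smul_mulVec_dotProduct_pos (hL : L.PosSemidef) {t : ℝ} (ht : 0 ≤ t)
    {z : ι → ℝ} (hz : L *ᵥ z ≠ 0) :
    0 < ((1 + t • L)⁻¹ *ᵥ z) ⬝ᵥ (((1 + t • L)⁻¹ * L * (1 + t • L)⁻¹) *ᵥ z) := by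
  -- Writing `z = M² u`, the form becomes `(M u) ⬝ᵥ L u = uᵀ L u + t ‖L u‖²`.
  set M := 1 + t • L
  set u := M⁻¹ *ᵥ (M⁻¹ *ᵥ z)
  have hMR : M * M⁻¹ = 1 := mul_nonsing_inv _ (hL.isUnit_det_one_add_smul ht)
  have hRM : M⁻¹ * M = 1 := nonsing_inv_mul _ (hL.isUnit_det_one_add_smul ht)
  have hLM : L * M = M * L := by
    simp only [M, Matrix.mul_add, Matrix.add_mul, mul_one, one_mul, mul_smul_comm, smul_mul_assoc]
  have hz_eq : z = M *ᵥ (M *ᵥ u) := by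
    simp only [u, mulVec_mulVec, ← Matrix.mul_assoc, hMR, Matrix.mul_one, one_mulVec]
  have hleft : M⁻¹ *ᵥ z = M *ᵥ u := by
    rw [hz_eq, mulVec_mulVec, hRM, one_mulVec]
  have hright : (M⁻¹ * L * M⁻¹) *ᵥ z = L *ᵥ u := by
    rw [hz_eq, mulVec_mulVec, mulVec_mulVec, Matrix.mul_assoc (M⁻¹ * L), hRM, Matrix.mul_one,
      Matrix.mul_assoc, hLM, ← Matrix.mul_assoc, hRM, Matrix.one_mul]
  have hLu : L *ᵥ u ≠ 0 := by
    intro h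
    apply hz
    rw [hz_eq, mulVec_mulVec, mulVec_mulVec, hLM, Matrix.mul_assoc, hLM, ← Matrix.mul_assoc,
      ← mulVec_mulVec, ← mulVec_mulVec, h, mulVec_zero, mulVec_zero]
  have hpos : 0 < u ⬝ᵥ (L *ᵥ u) := by
    refine lt_of_le_of_ne (by simpa using hL.dotProduct_mulVec_nonneg u) fun h => hLu ?_
    simpa using (hL.dotProduct_mulVec_zero_iff u).1 (by simpa using h.symm)
  rw [hleft, hright]
  calc 0 < u ⬝ᵥ (L *ᵥ u) + t * ((L *ᵥ u) ⬝ᵥ (L *ᵥ u)) := by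
        have := dotProduct_self_star_nonneg (L *ᵥ u)
        positivity
    _ = (M *ᵥ u) ⬝ᵥ (L *ᵥ u) := by
        simp only [M, add_mulVec, one_mulVec, smul_mulVec, add_dotProduct, smul_dotProduct,
          smul_eq_mul]

end Matrix.PosSemidef

noncomputable def psiInf (W : Matrix ι ι ℝ) (a : ℝ) : Matrix ι ι ℝ := (1 - a) • (1 - a • W)⁻¹

noncomputable def xPS (β : ℝ) (W : Matrix ι ι ℝ) (x : ι → ℝ) (a : ℝ) : ι → ℝ :=
  (1 - β) • (((1 - β • psiInf W a)⁻¹ * psiInf W a) *ᵥ x)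

theorem xPS_one_sub_eq_inv_one_add_smul_mulVec {L : Matrix ι ι ℝ} (hL : L.PosSemidef)
    {β a : ℝ} (hβ : β < 1) (ha0 : 0 ≤ a) (ha1 : a < 1) (x : ι → ℝ) :
    xPS β (1 - L) x a = (1 + (a / ((1 - β) * (1 - a))) • L)⁻¹ *ᵥ x := by
  set s := (1 - β) * (1 - a)
  set M := 1 + (a / s) • L
  have hs : s ≠ 0 := by positivity
  have hQ : 1 - a • (1 - L) = s • M + (β * (1 - a)) • (1 : Matrix ι ι ℝ) := by
    simp only [M, smul_add, smul_smul, mul_div_cancel₀ a hs]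
    module
  have hQdet : IsUnit (1 - a • (1 - L)).det := by
    refine (isUnit_iff_isUnit_det _).1 ?_
    convert (hL.posDef_smul_one_add_smul (sub_pos.2 ha1) ha0).isUnit using 1
    module
  have hMdet : IsUnit M.det := hL.isUnit_det_one_add_smul (by positivity)
  have hsM : (s • M)⁻¹ = s⁻¹ • M⁻¹ := inv_eq_right_inv <| by
    rw [smul_mul_smul_comm, mul_inv_cancel₀ hs, one_smul, mul_nonsing_inv _ hMdet]
  rw [xPS, psiInf, smul_smul, Matrix.mul_smul, inv_one_sub_smul_inv_mul_inv hQdet hQ, hsM,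
    smul_smul, smul_mulVec, smul_smul, ← mul_assoc, mul_inv_cancel₀ hs, one_smul]

section

variable {n : ℕ}

theorem varV_eq_dotProduct (x : Fin n → ℝ) :
    varV x = (x - meanV x • 1) ⬝ᵥ (x - meanV x • 1) := by
  simp [varV, dotProduct, sq]

theorem varV_eq_zero_of_forall_eq {x : Fin n → ℝ} (hx : ∀ i j, x i = x j) : varV x = 0 := by
  refine Finset.sum_eq_zero fun i _ => ?_
  have hn : (n : ℝ) ≠ 0 := Nat.cast_ne_zero.2 (Fin.pos i).ne'
  rw [meanV, Finset.sum_congr rfl fun j _ => hx j i]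
  simp [hn]

theorem meanV_mulVec {R : Matrix (Fin n) (Fin n) ℝ} (hR : 1 ᵥ* R = 1) (x : Fin n → ℝ) :
    meanV (R *ᵥ x) = meanV x := by
  rw [meanV, meanV, ← one_dotProduct, ← one_dotProduct, dotProduct_mulVec, hR]

theorem varV_mulVec {R : Matrix (Fin n) (Fin n) ℝ} (hR1 : R *ᵥ 1 = 1) (hR2 : 1 ᵥ* R = 1)
    (x : Fin n → ℝ) :
    varV (R *ᵥ x) = (R *ᵥ (x - meanV x • 1)) ⬝ᵥ (R *ᵥ (x - meanV x • 1)) := by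
  rw [varV_eq_dotProduct, meanV_mulVec hR2, mulVec_sub, mulVec_smul, hR1]

theorem exists_hasDerivAt_varV_xPS_neg {L : Matrix (Fin n) (Fin n) ℝ} (hL : L.PosSemidef)
    (hL1 : L *ᵥ 1 = 0) {x : Fin n → ℝ} (hx : L *ᵥ x ≠ 0) {β a : ℝ} (hβ : β < 1) (ha0 : 0 < a)
    (ha1 : a < 1) :
    ∃ D < 0, HasDerivAt (fun a => varV (xPS β (1 - L) x a)) D a := by
  have hβ' : 0 < 1 - β := sub_pos.2 hβ
  set τ : ℝ → ℝ := fun a => a / ((1 - β) * (1 - a))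
  have hτ0 : ∀ b ∈ Set.Ioo (0 : ℝ) 1, 0 ≤ τ b := fun b hb =>
    div_nonneg hb.1.le (mul_pos hβ' (sub_pos.2 hb.2)).le
  have hτ : HasDerivAt τ ((1 - β) / ((1 - β) * (1 - a)) ^ 2) a := by
    refine ((hasDerivAt_id' a).fun_div (((hasDerivAt_id' a).const_sub 1).const_mul (1 - β))
      (mul_pos hβ' (sub_pos.2 ha1)).ne').congr_deriv ?_
    ring
  set z := x - meanV x • 1
  have hz : L *ᵥ z ≠ 0 := by
    rwa [mulVec_sub, mulVec_smul, hL1, smul_zero, sub_zero]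
  have hvar : (fun a => varV (xPS β (1 - L) x a)) =ᶠ[𝓝 a]
      fun a => ((1 + τ a • L)⁻¹ *ᵥ z) ⬝ᵥ ((1 + τ a • L)⁻¹ *ᵥ z) := by
    filter_upwards [Ioo_mem_nhds ha0 ha1] with b hb
    rw [xPS_one_sub_eq_inv_one_add_smul_mulVec hL hβ hb.1.le hb.2,
      varV_mulVec (hL.inv_one_add_smul_mulVec_one hL1 (hτ0 b hb))
        (hL.one_vecMul_inv_one_add_smul hL1 (hτ0 b hb))]
  have hτa := hτ0 a ⟨ha0, ha1⟩
  refine ⟨_, mul_neg_of_neg_of_pos ?_ (by positivity),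
    ((hL.hasDerivAt_inv_one_add_smul_mulVec_dotProduct_self hτa z).comp a hτ).congr_of_eventuallyEq
      hvar⟩
  linarith [hL.inv_one_add_smul_mulVec_dotProduct_pos hτa hz]

end

theorem rowNormAdj_eq_one_sub_smul_lapMatrix {n : ℕ} (G : SimpleGraph (Fin n))
    [DecidableRel G.Adj] {d : ℕ} (hd : d ≠ 0) (hreg : ∀ i, G.degree i = d) :
    rowNormAdj G = 1 - (d : ℝ)⁻¹ • G.lapMatrix ℝ := by
  ext i j
  have hd' : (d : ℝ) ≠ 0 := Nat.cast_ne_zero.2 hd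
  by_cases hij : i = j <;>
    simp [rowNormAdj, SimpleGraph.lapMatrix, SimpleGraph.degMatrix, hreg, hij, hd', div_eq_inv_mul]

theorem variance_decreasing_in_peer_susceptibility_general {n : ℕ}
    (G : SimpleGraph (Fin n)) [DecidableRel G.Adj] (hG : G.Connected)
    (d : ℕ) (hd : 0 < d) (hreg : ∀ i, G.degree i = d)
    (β : ℝ) (hβ : β ∈ Set.Ioo (0 : ℝ) 1)
    (xstar : Fin n → ℝ)
    (hvar : 0 < varV xstar) :
    let W := rowNormAdj G
    let PsiInf : ℝ → Matrix (Fin n) (Fin n) ℝ := fun a => (1 - a) • (1 - a • W)⁻¹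
    let xPS : ℝ → Fin n → ℝ :=
      fun a => (1 - β) • (((1 - β • PsiInf a)⁻¹ * PsiInf a) *ᵥ xstar)
    (∀ a ∈ Set.Ioo (0 : ℝ) 1, DifferentiableAt ℝ (fun a' => varV (xPS a')) a) ∧
    (∀ a ∈ Set.Ioo (0 : ℝ) 1, deriv (fun a' => varV (xPS a')) a < 0) := by
  set L := (d : ℝ)⁻¹ • G.lapMatrix ℝ
  have hL : L.PosSemidef := (SimpleGraph.posSemidef_lapMatrix ℝ G).smul (by positivity)
  have hL1 : L *ᵥ 1 = 0 := by
    rw [smul_mulVec, show (1 : Fin n → ℝ) = fun _ => 1 from rfl,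
      SimpleGraph.lapMatrix_mulVec_const_eq_zero, smul_zero]
  have hLx : L *ᵥ xstar ≠ 0 := by
    rw [smul_mulVec, smul_ne_zero_iff_right (by positivity), Ne,
      SimpleGraph.lapMatrix_mulVec_eq_zero_iff_forall_reachable]
    exact fun h => hvar.ne' (varV_eq_zero_of_forall_eq fun i j => h i j (hG.preconnected i j))
  have key : ∀ a ∈ Set.Ioo (0 : ℝ) 1,
      ∃ D < 0, HasDerivAt (fun a' => varV (xPS β (rowNormAdj G) xstar a')) D a := by
    rw [rowNormAdj_eq_one_sub_smul_lapMatrix G hd.ne' hreg]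
    exact fun a ha => exists_hasDerivAt_varV_xPS_neg hL hL1 hLx hβ.2 ha.1 ha.2
  refine ⟨fun a ha => ?_, fun a ha => ?_⟩
  · obtain ⟨D, -, hD⟩ := key a ha
    exact hD.differentiableAt
  · obtain ⟨D, hD0, hD⟩ := key a ha
    exact hD.deriv ▸ hD0

/-- variance decreases in peer susceptibility.  On a `d`-regular
graph with fixed `β ∈ (0,1)` and nonconstant `x*`, the variance of
`x_PS(α) = (1 − β)(I − βΨ_∞(α))⁻¹ Ψ_∞(α) x*`, where
`Ψ_∞(α) = (1 − α)(I − αW)⁻¹`, is differentiable in `α` on `(0,1)` with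
strictly negative derivative. -/
theorem variance_decreasing_in_peer_susceptibility {n : ℕ} (hn : 2 ≤ n)
    (G : SimpleGraph (Fin n)) [DecidableRel G.Adj] (hG : G.Connected)
    (d : ℕ) (hd : 0 < d) (hreg : ∀ i, G.degree i = d)
    (β : ℝ) (hβ : β ∈ Set.Ioo (0 : ℝ) 1)
    (xstar : Fin n → ℝ) (hx : ∀ i, xstar i ∈ Set.Icc (0 : ℝ) 1)
    (hvar : 0 < varV xstar) :
    let W := rowNormAdj G
    let PsiInf : ℝ → Matrix (Fin n) (Fin n) ℝ := fun a => (1 - a) • (1 - a • W)⁻¹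
    let xPS : ℝ → Fin n → ℝ :=
      fun a => (1 - β) • (((1 - β • PsiInf a)⁻¹ * PsiInf a) *ᵥ xstar)
    (∀ a ∈ Set.Ioo (0 : ℝ) 1, DifferentiableAt ℝ (fun a' => varV (xPS a')) a) ∧
    (∀ a ∈ Set.Ioo (0 : ℝ) 1, deriv (fun a' => varV (xPS a')) a < 0) :=
  variance_decreasing_in_peer_susceptibility_general G hG d hd hreg β hβ xstar hvar
end
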